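/- Let A be a differential K-algebra without exponents nor logarithm such that ∂: E_A → E_A is surjective. Then the class of regular singular differential modules over A is stable under extensions: if 0 → M → Q → N → 0 is an exact sequence of differential modules over A with M and N regular singular, then Q is regular singular. -/

import Mathlib

open scoped TensorProduct
open Polynomial

noncomputable section

/-- `K[t,t⁻¹] → K[t^K]`: the inclusion of the Laurent polynomials (the group algebra
of `ℤ`) into the group algebra `K⟨K⟩ = K[t^K]` of the additive group `(K,+)`. -/
instance instLaurentToGrpAlg (K : Type) [Field K] :
    Algebra (LaurentPolynomial K) (AddMonoidAlgebra K K) :=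
  (AddMonoidAlgebra.mapDomainRingHom K (Int.castAddHom K)).toAlgebra

variable (K : Type) [Field K] [IsAlgClosed K] [CharZero K]
variable (A : Type) [CommRing A] [Algebra K A] [Algebra (LaurentPolynomial K) A]
  [IsScalarTower K (LaurentPolynomial K) A]

/-- `A[t^K] := A ⊗_{K[t,t⁻¹]} K[t^K]`. -/
abbrev AtK := A ⊗[LaurentPolynomial K] (AddMonoidAlgebra K K)

/-- The ring of exponents `E_A := A[t^K][ℓ]`. -/
abbrev EA := Polynomial (AtK K A)

/-- The canonical inclusion `A → E_A`. -/
def iA : A →+* EA K A :=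
  (Polynomial.C).comp (Algebra.TensorProduct.includeLeftRingHom)

/-- The element `t^a ∈ A[t^K] ⊆ E_A`, for `a ∈ K`. -/
def tpow (a : K) : EA K A :=
  Polynomial.C ((1:A) ⊗ₜ[LaurentPolynomial K] (AddMonoidAlgebra.single a 1))

/-- `t ∈ A`, the image of the Laurent variable. -/
def tA : A := algebraMap (LaurentPolynomial K) A (LaurentPolynomial.T 1)

variable {K A}

/-- `∂ : A → A` is a derivation extending `t·d/dt` on `K[t,t⁻¹]`: it kills the
constants `K` and sends `t` to `t`. -/
def ExtendsTddt (dA : Derivation ℤ A A) : Prop :=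
  (∀ c : K, dA (algebraMap K A c) = 0) ∧ dA (tA K A) = tA K A

/-- The characterizing properties of the derivation `∂` on `E_A`: it extends the
derivation `∂` of `A`, satisfies `∂(t^a) = a·t^a` for all `a ∈ K`, and `∂(ℓ) = 1`. -/
def DProps (dA : Derivation ℤ A A) (D : Derivation ℤ (EA K A) (EA K A)) : Prop :=
  (∀ x : A, D (iA K A x) = iA K A (dA x)) ∧
  (∀ a : K, D (tpow K A a) = a • tpow K A a) ∧
  D (Polynomial.X : EA K A) = 1

/-- `γ : K → Kˣ` is a group homomorphism from `(K,+)` to `Kˣ` with kernel exactly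
`ℤ` (induced by a choice of isomorphism `K/ℤ ≅ Kˣ`). -/
def GammaProps (γ : K → Kˣ) : Prop :=
  (∀ a b : K, γ (a + b) = γ a * γ b) ∧ (∀ a : K, γ a = 1 ↔ ∃ n : ℤ, (n : K) = a)

/-- The characterizing properties of the monodromy automorphism `σ` of `E_A`:
it fixes `A` pointwise, `σ(t^a) = γ(a)·t^a`, and `σ(ℓ) = ℓ + 1`. -/
def SProps (γ : K → Kˣ) (σ : EA K A ≃+* EA K A) : Prop :=
  (∀ x : A, σ (iA K A x) = iA K A x) ∧
  (∀ a : K, σ (tpow K A a) = ((γ a : K) • tpow K A a)) ∧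
  σ (Polynomial.X : EA K A) = Polynomial.X + 1

/-- `A` is a differential `K`-algebra without exponents nor logarithm:
`A^{∂²=0} = K` and `A^{∂+a=0} = 0` for every `a ∈ K` not in `ℤ`. -/
def NoExpLog (dA : Derivation ℤ A A) : Prop :=
  (∀ x : A, dA (dA x) = 0 ↔ ∃ c : K, x = algebraMap K A c) ∧
  (∀ a : K, (¬ ∃ n : ℤ, (n : K) = a) → ∀ x : A, dA x + a • x = 0 → x = 0)


set_option synthInstance.maxHeartbeats 1000000
set_option maxHeartbeats 1000000


/-- `∇ : M → M` is a connection on the `A`-module `M` over `(A,∂)`: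
`∇(f·m) = ∂(f)·m + f·∇(m)`. -/
def IsConnection (dA : Derivation ℤ A A) {M : Type} [AddCommGroup M] [Module A M]
    (nb : M →+ M) : Prop :=
  ∀ (f : A) (m : M), nb (f • m) = dA f • m + f • nb m


/-- The differential module `(M,∇)` over `A` is regular singular: it is finite free
as an `A`-module and it is trivialized by `E_A`, i.e. `M ⊗_A E_A`, with the
connection `∇ ⊗ 1 + 1 ⊗ ∂`, is isomorphic as a differential module over `E_A` to a
finite direct sum of copies of `(E_A, ∂)`. -/
def IsRegSing (D : Derivation ℤ (EA K A) (EA K A))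
    {M : Type} [AddCommGroup M] [Module A M] (nb : M →+ M) : Prop :=
  Module.Finite A M ∧ Module.Free A M ∧
  ∃ nb' : (EA K A ⊗[A] M) →+ (EA K A ⊗[A] M),
    (∀ (x : EA K A) (m : M), nb' (x ⊗ₜ[A] m) = D x ⊗ₜ[A] m + x ⊗ₜ[A] nb m) ∧
    ∃ (n : ℕ) (φ : (EA K A ⊗[A] M) ≃ₗ[EA K A] (Fin n → EA K A)),
      ∀ w i, φ (nb' w) i = D (φ w i)

end

/-!
Since `N` is free, the sequence splits `A`-linearly, `Q ≅ M × N`, and in this splitting the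
connection of `Q` reads `(m, n) ↦ (∇m + h n, ∇n)`, where the `A`-linear `h : N → M` measures how
far the section of `g` is from being horizontal. After base change to `E_A` and trivialising `M`
and `N`, this is `(x, y) ↦ (∂x + T y, ∂y)` on `E_A^m × E_A^n` for a matrix `T` over `E_A`. As `∂`
is surjective on `E_A`, `T = ∂C` entrywise for some matrix `C`, and the shear
`(x, y) ↦ (x + C y, y)` carries this connection to the trivial one.
-/

section TrivialConnection

variable {S R : Type*} [CommSemiring S] [CommSemiring R] [Algebra S R] (D : Derivation S R R)
  {V W V₁ V₂ : Type*} [AddCommMonoid V] [Module R V] [AddCommMonoid W] [Module R W]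
  [AddCommMonoid V₁] [Module R V₁] [AddCommMonoid V₂] [Module R V₂]

def IsTrivialConnection (nb : V →+ V) : Prop :=
  ∃ (n : ℕ) (φ : V ≃ₗ[R] (Fin n → R)), ∀ w i, φ (nb w) i = D (φ w i)

variable {D}

theorem IsTrivialConnection.of_linearEquiv {nbV : V →+ V} {nbW : W →+ W}
    (hW : IsTrivialConnection D nbW) (e : V ≃ₗ[R] W) (he : ∀ v, e (nbV v) = nbW (e v)) :
    IsTrivialConnection D nbV :=
  let ⟨n, φ, hφ⟩ := hW
  ⟨n, e ≪≫ₗ φ, fun v i => by simp [he, hφ]⟩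

variable (D) in
theorem isTrivialConnection_pi (ι : Type*) [Fintype ι] :
    IsTrivialConnection D ((D : R →+ R).compLeft ι) :=
  ⟨_, LinearEquiv.funCongrLeft R R (Fintype.equivFin ι).symm, fun _ _ => rfl⟩

theorem IsTrivialConnection.prodMap {nb₁ : V₁ →+ V₁} {nb₂ : V₂ →+ V₂}
    (h₁ : IsTrivialConnection D nb₁) (h₂ : IsTrivialConnection D nb₂) :
    IsTrivialConnection D (nb₁.prodMap nb₂) := by
  obtain ⟨m, φ₁, hφ₁⟩ := h₁
  obtain ⟨n, φ₂, hφ₂⟩ := h₂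
  refine (isTrivialConnection_pi D (Fin m ⊕ Fin n)).of_linearEquiv
    ((φ₁.prodCongr φ₂).trans (LinearEquiv.sumArrowLequivProdArrow _ _ R R).symm) ?_
  rintro ⟨v₁, v₂⟩
  ext (i | i) <;> simp [hφ₁, hφ₂]

def extensionConnection (nb₁ : V₁ →+ V₁) (nb₂ : V₂ →+ V₂) (T : V₂ →ₗ[R] V₁) :
    V₁ × V₂ →+ V₁ × V₂ :=
  (nb₁.comp (.fst V₁ V₂) + T.toAddMonoidHom.comp (.snd V₁ V₂)).prod (nb₂.comp (.snd V₁ V₂))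

@[simp]
theorem extensionConnection_apply (nb₁ : V₁ →+ V₁) (nb₂ : V₂ →+ V₂) (T : V₂ →ₗ[R] V₁)
    (p : V₁ × V₂) :
    extensionConnection nb₁ nb₂ T p = (nb₁ p.1 + T p.2, nb₂ p.2) :=
  rfl

end TrivialConnection

section Extension

open Matrix

variable {S R : Type*} [CommSemiring S] [CommRing R] [Algebra S R] (D : Derivation S R R)
  {ι κ : Type*} [Fintype ι]

theorem Derivation.leibniz_mulVec (C : Matrix κ ι R) (y : ι → R) (i : κ) :
    D ((C *ᵥ y) i) = (C.map D *ᵥ y) i + (C *ᵥ (D ∘ y)) i := by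
  simp only [Function.comp_apply, Matrix.mulVec, dotProduct, map_sum,
    Derivation.leibniz, smul_eq_mul, Finset.sum_add_distrib, Matrix.map_apply, mul_comm, add_comm]

def Matrix.shearEquiv (C : Matrix κ ι R) : ((κ → R) × (ι → R)) ≃ₗ[R] (κ → R) × (ι → R) :=
  .ofLinearMap ((.fst R _ _ + C.mulVecLin ∘ₗ .snd R _ _).prod (.snd R _ _))
    ((.fst R _ _ - C.mulVecLin ∘ₗ .snd R _ _).prod (.snd R _ _))
    (by ext <;> simp) (by ext <;> simp)

@[simp]
theorem Matrix.shearEquiv_apply (C : Matrix κ ι R) (p : (κ → R) × (ι → R)) :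
    C.shearEquiv p = (p.1 + C *ᵥ p.2, p.2) :=
  rfl

variable {D} [DecidableEq ι]

theorem exists_linearEquiv_extensionConnection_pi (hD : Function.Surjective D)
    (T : (ι → R) →ₗ[R] (κ → R)) :
    ∃ ψ : ((κ → R) × (ι → R)) ≃ₗ[R] (κ → R) × (ι → R), ∀ p,
      ψ (extensionConnection ((D : R →+ R).compLeft κ) ((D : R →+ R).compLeft ι) T p) =
        ((D : R →+ R).compLeft κ).prodMap ((D : R →+ R).compLeft ι) (ψ p) := by
  let C : Matrix κ ι R := (LinearMap.toMatrix' T).map (Function.surjInv hD)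
  have hC : C.map D = LinearMap.toMatrix' T := by
    ext i j
    exact Function.surjInv_eq hD _
  refine ⟨C.shearEquiv, fun p => Prod.ext (funext fun i => ?_) rfl⟩
  simp only [extensionConnection_apply, Matrix.shearEquiv_apply, AddMonoidHom.coe_prodMap,
    Prod.map_apply, AddMonoidHom.compLeft_apply, AddMonoidHom.coe_coe, Function.comp_apply,
    Pi.add_apply, map_add, Derivation.leibniz_mulVec, hC, LinearMap.toMatrix'_mulVec, add_assoc]
  rfl

theorem IsTrivialConnection.extensionConnection (hD : Function.Surjective D)
    {V₁ V₂ : Type*} [AddCommMonoid V₁] [Module R V₁] [AddCommMonoid V₂] [Module R V₂]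
    {nb₁ : V₁ →+ V₁} {nb₂ : V₂ →+ V₂} (h₁ : IsTrivialConnection D nb₁)
    (h₂ : IsTrivialConnection D nb₂) (T : V₂ →ₗ[R] V₁) :
    IsTrivialConnection D (extensionConnection nb₁ nb₂ T) := by
  obtain ⟨m, φ₁, hφ₁⟩ := h₁
  obtain ⟨n, φ₂, hφ₂⟩ := h₂
  obtain ⟨ψ, hψ⟩ := exists_linearEquiv_extensionConnection_pi hD
    (φ₁.toLinearMap ∘ₗ T ∘ₗ φ₂.symm.toLinearMap)
  refine (((isTrivialConnection_pi D _).prodMap (isTrivialConnection_pi D _)).of_linearEquiv ψ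
    hψ).of_linearEquiv (φ₁.prodCongr φ₂) ?_
  rintro ⟨v₁, v₂⟩
  ext i <;> simp [hφ₁, hφ₂]

end Extension

section DifferentialModule

variable {A : Type} [CommRing A] {dA : Derivation ℤ A A}
  {M N Q : Type} [AddCommGroup M] [Module A M] [AddCommGroup N] [Module A N]
  [AddCommGroup Q] [Module A Q] {nM : M →+ M} {nN : N →+ N} {nQ : Q →+ Q}

def connectionDefect (hnN : IsConnection dA nN) (hnQ : IsConnection dA nQ) (s : N →ₗ[A] Q) :
    N →ₗ[A] Q where
  toFun x := nQ (s x) - s (nN x)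
  map_add' x y := by
    simp only [map_add]
    abel
  map_smul' a x := by
    simp only [map_smul, hnQ a, hnN a, map_add, RingHom.id_apply, smul_sub]
    abel

theorem connectionDefect_apply (hnN : IsConnection dA nN) (hnQ : IsConnection dA nQ)
    (s : N →ₗ[A] Q) (x : N) : connectionDefect hnN hnQ s x = nQ (s x) - s (nN x) :=
  rfl

theorem Function.Exact.exists_linearEquiv_extensionConnection {f : M →ₗ[A] Q} {g : Q →ₗ[A] N}
    (hexact : Function.Exact f g) (hf : Function.Injective f) (s : N →ₗ[A] Q)
    (hs : g ∘ₗ s = .id) (hnN : IsConnection dA nN) (hnQ : IsConnection dA nQ)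
    (hf_comm : ∀ m, f (nM m) = nQ (f m)) (hg_comm : ∀ q, g (nQ q) = nN (g q)) :
    ∃ (e : Q ≃ₗ[A] M × N) (h : N →ₗ[A] M),
      ∀ q, e (nQ q) = extensionConnection nM nN h (e q) := by
  let e := (hexact.splitSurjectiveEquiv hf ⟨s, hs⟩).1
  have he_symm : ∀ p, e.symm p = f p.1 + s p.2 := fun p => rfl
  have he_snd : ∀ q, (e q).2 = g q := fun q =>
    (LinearMap.congr_fun (hexact.splitSurjectiveEquiv hf ⟨s, hs⟩).2.2 q).symm
  have he_fst : ∀ q, g q = 0 → f (e q).1 = q := fun q hq => by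
    simpa [he_symm, he_snd, hq] using e.symm_apply_apply q
  have hgs : ∀ x, g (s x) = x := LinearMap.congr_fun hs
  let h : N →ₗ[A] M := LinearMap.fst A M N ∘ₗ e.toLinearMap ∘ₗ connectionDefect hnN hnQ s
  have hfh : ∀ x, f (h x) = nQ (s x) - s (nN x) :=
    fun x => he_fst _ (by simp [connectionDefect_apply, hg_comm, hgs])
  refine ⟨e, h, fun q => e.symm.injective ?_⟩
  obtain ⟨p, rfl⟩ := e.symm.surjective q
  rw [e.symm_apply_apply, e.apply_symm_apply, he_symm, he_symm]
  simp only [extensionConnection_apply, map_add, hf_comm, hfh]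
  abel

end DifferentialModule

section RegularSingular

open TensorProduct

variable {K : Type} [Field K] {A : Type} [CommRing A] [Algebra (LaurentPolynomial K) A]
  {D : Derivation ℤ (EA K A) (EA K A)}
  {M N V W : Type} [AddCommGroup M] [Module A M] [AddCommGroup N] [Module A N]
  [AddCommGroup V] [Module A V] [AddCommGroup W] [Module A W]

theorem isRegSing_iff {nV : V →+ V} :
    IsRegSing D nV ↔ Module.Finite A V ∧ Module.Free A V ∧
      ∃ nV' : EA K A ⊗[A] V →+ EA K A ⊗[A] V,
        (∀ (x : EA K A) (v : V), nV' (x ⊗ₜ v) = D x ⊗ₜ v + x ⊗ₜ nV v) ∧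
          IsTrivialConnection D nV' :=
  Iff.rfl

theorem IsRegSing.of_linearEquiv {nV : V →+ V} {nW : W →+ W} (hW : IsRegSing D nW)
    (e : V ≃ₗ[A] W) (he : ∀ v, e (nV v) = nW (e v)) : IsRegSing D nV := by
  obtain ⟨_, _, nW', hnW', hW'⟩ := isRegSing_iff.1 hW
  let eE := e.baseChange A (EA K A) V W
  refine isRegSing_iff.2 ⟨.equiv e.symm, .of_equiv e.symm,
    eE.symm.toAddMonoidHom.comp (nW'.comp eE.toAddMonoidHom), fun x v => ?_,
    IsTrivialConnection.of_linearEquiv hW' eE fun w => by simp⟩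
  apply eE.injective
  simp [eE, hnW', he]

theorem IsRegSing.extensionConnection (hD : Function.Surjective D) {nM : M →+ M}
    {nN : N →+ N} (hM : IsRegSing D nM) (hN : IsRegSing D nN) (h : N →ₗ[A] M) :
    IsRegSing D (extensionConnection nM nN h) := by
  obtain ⟨_, _, nM', hnM', hM'⟩ := isRegSing_iff.1 hM
  obtain ⟨_, _, nN', hnN', hN'⟩ := isRegSing_iff.1 hN
  let eE := prodRight A (EA K A) (EA K A) M N
  let nE := _root_.extensionConnection (R := EA K A) nM' nN' (h.baseChange (EA K A))
  refine isRegSing_iff.2 ⟨inferInstance, inferInstance,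
    eE.symm.toAddMonoidHom.comp (nE.comp eE.toAddMonoidHom), fun x v => ?_, ?_⟩
  · apply eE.injective
    simp [eE, nE, hnM', hnN', tmul_add, add_assoc]
  · refine (IsTrivialConnection.extensionConnection (R := EA K A) hD hM' hN'
      (h.baseChange (EA K A))).of_linearEquiv eE fun w => ?_
    simp [nE]

end RegularSingular

theorem stmt_18_general (K : Type) [Field K]
    (A : Type) [CommRing A] [Algebra (LaurentPolynomial K) A]
    (dA : Derivation ℤ A A)
    (D : Derivation ℤ (EA K A) (EA K A))
    (hDsurj : Function.Surjective (D : EA K A → EA K A))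
    (M : Type) [AddCommGroup M] [Module A M]
    (nM : M →+ M) (hM : IsRegSing D nM)
    (Q : Type) [AddCommGroup Q] [Module A Q]
    (nQ : Q →+ Q) (hnQ : IsConnection dA nQ)
    (N : Type) [AddCommGroup N] [Module A N]
    (nN : N →+ N) (hnN : IsConnection dA nN) (hN : IsRegSing D nN)
    -- `0 → M → Q → N → 0` is an exact sequence of differential modules
    (f : M →ₗ[A] Q) (g : Q →ₗ[A] N)
    (hf : ∀ m : M, f (nM m) = nQ (f m)) (hg : ∀ q : Q, g (nQ q) = nN (g q))
    (hfinj : Function.Injective f) (hgsurj : Function.Surjective g)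
    (hexact : LinearMap.range f = LinearMap.ker g) :
    IsRegSing D nQ := by
  have : Module.Free A N := hN.2.1
  obtain ⟨s, hs⟩ := Module.projective_lifting_property g .id hgsurj
  obtain ⟨e, h, he⟩ := (LinearMap.exact_iff.2 hexact.symm).exists_linearEquiv_extensionConnection
    hfinj s hs hnN hnQ hf hg
  exact (hM.extensionConnection hDsurj hN h).of_linearEquiv e he

/-- if `A` is a differential `K`-algebra without exponents nor
logarithm such that `∂ : E_A → E_A` is surjective, then regular singular
differential modules over `A` are stable under extensions: if
`0 → M → Q → N → 0` is an exact sequence of differential modules over `A` with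
`M` and `N` regular singular, then `Q` is regular singular. -/
theorem stmt_18 (K : Type) [Field K] [IsAlgClosed K] [CharZero K]
    (A : Type) [CommRing A] [Algebra K A] [Algebra (LaurentPolynomial K) A]
    [IsScalarTower K (LaurentPolynomial K) A]
    (hinj : Function.Injective (algebraMap (LaurentPolynomial K) A))
    (dA : Derivation ℤ A A) (hdA : ExtendsTddt (K := K) dA)
    (hNoExpLog : NoExpLog (K := K) dA)
    (D : Derivation ℤ (EA K A) (EA K A)) (hD : DProps (K := K) dA D)
    (hDsurj : Function.Surjective (D : EA K A → EA K A))
    (M : Type) [AddCommGroup M] [Module A M]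
    (nM : M →+ M) (hnM : IsConnection dA nM) (hM : IsRegSing D nM)
    (Q : Type) [AddCommGroup Q] [Module A Q]
    (nQ : Q →+ Q) (hnQ : IsConnection dA nQ)
    (N : Type) [AddCommGroup N] [Module A N]
    (nN : N →+ N) (hnN : IsConnection dA nN) (hN : IsRegSing D nN)
    -- `0 → M → Q → N → 0` is an exact sequence of differential modules
    (f : M →ₗ[A] Q) (g : Q →ₗ[A] N)
    (hf : ∀ m : M, f (nM m) = nQ (f m)) (hg : ∀ q : Q, g (nQ q) = nN (g q))
    (hfinj : Function.Injective f) (hgsurj : Function.Surjective g)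
    (hexact : LinearMap.range f = LinearMap.ker g) :
    IsRegSing D nQ :=
  stmt_18_general K A dA D hDsurj M nM hM Q nQ hnQ N nN hnN hN f g hf hg hfinj hgsurj hexact
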